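/- arXiv:2501.08116 — 7 statements merged into one kernel-verified Lean document; each statement's English description precedes it below -/
import Mathlib

section
/- For a non-integer β > 1, the initial density function h_β(x) := Σ_{n ≥ 0, T_β^n(1) > x} β^{-n} is right continuous at every point of [0,1). -/
open MeasureTheory Filter Set

/-- The orbit of `1` under the β-transformation: `betaOrb β 0 = 1`,
`betaOrb β (n+1) = β * betaOrb β n (mod 1)`. -/
noncomputable def betaOrb (β : ℝ) : ℕ → ℝ
  | 0 => 1
  | n + 1 => Int.fract (β * betaOrb β n)

/-- The unnormalized density `h_β(x) = Σ_{n ≥ 0, T_β^n(1) > x} β^{-n}`. -/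
noncomputable def hBeta (β : ℝ) (x : ℝ) : ℝ :=
  ∑' n : ℕ, if x < betaOrb β n then (β ^ n)⁻¹ else 0

/-- The normalization constant `K_β = Σ_{n ≥ 0} T_β^n(1) / β^n`. -/
noncomputable def KBeta (β : ℝ) : ℝ :=
  ∑' n : ℕ, betaOrb β n / β ^ n

/-- The Rényi–Parry measure: density `h_β / K_β` w.r.t. Lebesgue measure on `[0,1)`. -/
noncomputable def nuBeta (β : ℝ) : Measure ℝ :=
  (volume.restrict (Set.Ico (0 : ℝ) 1)).withDensity
    (fun x => ENNReal.ofReal (hBeta β x / KBeta β))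

open Topology

/-!
Each summand `x ↦ if x < T_β^n(1) then β^{-n} else 0` is a step function that is right
continuous (the strict inequality makes the jump left-open), and the summands are dominated by
the summable series `β^{-n}`, so Tannery's theorem passes right continuity to the sum.
-/

section StepFunctions

variable {α M : Type*} [LinearOrder α] [TopologicalSpace α] [OrderTopology α]

theorem continuousWithinAt_Ici_ite_lt [Zero M] [TopologicalSpace M] (a : α) (c : M) (x₀ : α) :
    ContinuousWithinAt (fun x => if x < a then c else 0) (Ici x₀) x₀ := by
  rcases lt_or_ge x₀ a with h | h
  · have hc : (fun _ => c) =ᶠ[𝓝 x₀] fun x => if x < a then c else 0 :=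
      (eventually_lt_nhds h).mono fun x hx => (if_pos hx).symm
    exact (continuousAt_const.congr hc).continuousWithinAt
  · exact continuousWithinAt_const.congr (fun x hx => if_neg (h.trans hx).not_gt)
      (if_neg h.not_gt)

theorem continuousWithinAt_Ici_tsum_ite_lt {ι : Type*} [NormedAddCommGroup M] [CompleteSpace M]
    (a : ι → α) {w : ι → M} (hw : Summable fun i => ‖w i‖) (x₀ : α) :
    ContinuousWithinAt (fun x => ∑' i, if x < a i then w i else 0) (Ici x₀) x₀ := by
  refine tendsto_tsum_of_dominated_convergence hw
    (fun i => continuousWithinAt_Ici_ite_lt (a i) (w i) x₀) (Eventually.of_forall fun x i => ?_)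
  split_ifs <;> simp

end StepFunctions

theorem stmt_2_general (β : ℝ) (hβ : 1 < β)
    (x₀ : ℝ) :
    Filter.Tendsto (hBeta β) (nhdsWithin x₀ (Set.Ici x₀)) (nhds (hBeta β x₀)) := by
  have hgeom : Summable fun n : ℕ => ‖(β ^ n)⁻¹‖ := by
    simpa [inv_pow, abs_of_pos (zero_lt_one.trans hβ)] using
      summable_geometric_of_lt_one (by positivity) (inv_lt_one_of_one_lt₀ hβ)
  exact continuousWithinAt_Ici_tsum_ite_lt (betaOrb β) hgeom x₀

theorem stmt_2 (β : ℝ) (hβ : 1 < β) (hni : ¬ ∃ k : ℤ, β = k)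
    (x₀ : ℝ) (hx₀ : x₀ ∈ Set.Ico (0 : ℝ) 1) :
    Filter.Tendsto (hBeta β) (nhdsWithin x₀ (Set.Ici x₀)) (nhds (hBeta β x₀)) :=
  stmt_2_general β hβ x₀
end

section
/- Let β₁ > 1 be the positive root of x² - qx - p = 0 where p, q are positive integers with p ≤ q, and let β₂ = β₁ + 1. Then T_{β₂}^n(1) = β₁ - q for every n ≥ 1; i.e., the point β₁ - q is a fixed point of T_{β₂} and is the orbit of 1 under T_{β₂}. -/
open MeasureTheory Filter Set

theorem betaOrb_eq_of_fract_mul_eq {β x : ℝ} {k : ℕ} (hk : betaOrb β k = x)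
    (hx : Int.fract (β * x) = x) : ∀ n : ℕ, k ≤ n → betaOrb β n = x := by
  intro n hn
  induction n, hn using Nat.le_induction with
  | base => exact hk
  | succ n _ ih => rw [betaOrb, ih, hx]

theorem betaOrb_one (β : ℝ) : betaOrb β 1 = Int.fract β := by
  simp [betaOrb]

theorem floor_eq_of_sq_sub_mul_sub_eq_zero {p q : ℕ} (hpq : p ≤ q) {β : ℝ} (hβ : 0 < β)
    (hroot : β ^ 2 - q * β - p = 0) : ⌊β⌋ = q := by
  have hpq' : (p : ℝ) ≤ q := by exact_mod_cast hpq
  have hmul : β * (β - q) = p := by linear_combination hroot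
  rw [Int.floor_eq_iff]
  push_cast
  constructor <;> nlinarith [(p.cast_nonneg : (0 : ℝ) ≤ p)]

theorem stmt_7_general (p q : ℕ) (hpq : p ≤ q) (β₁ : ℝ) (hβ₁ : 1 < β₁)
    (hroot : β₁ ^ 2 - q * β₁ - p = 0) (β₂ : ℝ) (hβ₂ : β₂ = β₁ + 1) :
    (∀ n : ℕ, 1 ≤ n → betaOrb β₂ n = β₁ - q) ∧
      Int.fract (β₂ * (β₁ - q)) = β₁ - q := by
  have hfract : Int.fract β₁ = β₁ - q := by
    rw [Int.fract, floor_eq_of_sq_sub_mul_sub_eq_zero hpq (zero_lt_one.trans hβ₁) hroot,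
      Int.cast_natCast]
  -- Since `β₁ (β₁ - q) = p`, multiplying `β₁ - q` by `β₁ + 1` shifts it by the integer `p`.
  have hfix : Int.fract (β₂ * (β₁ - q)) = β₁ - q := by
    have hshift : β₂ * (β₁ - q) = p + Int.fract β₁ := by
      rw [hfract, hβ₂]; linear_combination hroot
    rw [hshift, Int.fract_natCast_add, Int.fract_fract, hfract]
  refine ⟨betaOrb_eq_of_fract_mul_eq ?_ hfix, hfix⟩
  rw [betaOrb_one, hβ₂, Int.fract_add_one, hfract]

theorem stmt_7 (p q : ℕ) (hp : 1 ≤ p) (hpq : p ≤ q) (β₁ : ℝ) (hβ₁ : 1 < β₁)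
    (hroot : β₁ ^ 2 - q * β₁ - p = 0) (β₂ : ℝ) (hβ₂ : β₂ = β₁ + 1) :
    (∀ n : ℕ, 1 ≤ n → betaOrb β₂ n = β₁ - q) ∧
      Int.fract (β₂ * (β₁ - q)) = β₁ - q :=
  stmt_7_general p q hpq β₁ hβ₁ hroot β₂ hβ₂
end

section
/- Let β₁ > 1 be the positive root of x² - qx - p = 0 where p, q are positive integers with p ≤ q, and let β₂ = β₁ + 1. Then the unnormalized density functions coincide: for all x ∈ [0,1), h_{β₁}(x) = h_{β₂}(x), where both equal 1_{[0,1)}(x) + (1/β₁)·1_{[0, β₁ - q)}(x). -/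
/-!
Put `c = β₁ - q`. The root equation says `β₁ c = p`, and `p ≤ q` gives `0 ≤ c < 1`. Hence the
`β₁`-orbit of `1` is `1, c, 0, 0, …`, so `h_{β₁} = 1 + β₁⁻¹ 1_{[0,c)}` on `[0,1)`. Since
`β₂ c = p + c`, the `β₂`-orbit of `1` is `1, c, c, …`, so
`h_{β₂} = 1 + (Σ_{n ≥ 1} β₂⁻ⁿ) 1_{[0,c)} = 1 + (β₂ - 1)⁻¹ 1_{[0,c)}`, and `β₂ - 1 = β₁`.
-/

open MeasureTheory Filter Set

section BetaOrbit

variable {β c x : ℝ}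

theorem betaOrb_zero (β : ℝ) : betaOrb β 0 = 1 := rfl

theorem betaOrb_succ (β : ℝ) (n : ℕ) : betaOrb β (n + 1) = Int.fract (β * betaOrb β n) := rfl

theorem betaOrb_eq_zero_of_le {N n : ℕ} (hN : betaOrb β N = 0) (hn : N ≤ n) :
    betaOrb β n = 0 := by
  induction n, hn using Nat.le_induction with
  | base => exact hN
  | succ n _ ih => rw [betaOrb_succ, ih, mul_zero, Int.fract_zero]

theorem betaOrb_succ_eq_of_fract_mul_eq (h₁ : Int.fract β = c) (hc : Int.fract (β * c) = c)
    (n : ℕ) : betaOrb β (n + 1) = c := by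
  induction n with
  | zero => rw [betaOrb_succ, betaOrb_zero, mul_one, h₁]
  | succ n ih => rw [betaOrb_succ, ih, hc]

theorem hBeta_eq_sum_range_of_betaOrb_eq_zero {N : ℕ} (hN : betaOrb β N = 0) (hx : 0 ≤ x) :
    hBeta β x = ∑ n ∈ Finset.range N, if x < betaOrb β n then (β ^ n)⁻¹ else 0 :=
  tsum_eq_sum fun n hn => if_neg <| by
    rw [betaOrb_eq_zero_of_le hN (by simpa using hn)]
    exact hx.not_gt

theorem hBeta_of_betaOrb_succ_eq (hβ : 1 < β) (horb : ∀ n, betaOrb β (n + 1) = c)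
    (hx : x < 1) : hBeta β x = 1 + if x < c then (β - 1)⁻¹ else 0 := by
  by_cases hxc : x < c
  · have hgeom (n : ℕ) : (if x < betaOrb β n then (β ^ n)⁻¹ else 0) = β⁻¹ ^ n := by
      cases n with
      | zero => simp [betaOrb_zero, hx]
      | succ n => rw [horb, if_pos hxc, inv_pow]
    rw [hBeta, tsum_congr hgeom, tsum_geometric_of_lt_one (by positivity) (inv_lt_one_of_one_lt₀ hβ),
      if_pos hxc]
    have hβ₀ : β ≠ 0 := by positivity
    have hβ₁ : β - 1 ≠ 0 := sub_ne_zero.2 hβ.ne'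
    field_simp
    ring
  · rw [hBeta, tsum_eq_sum (s := {0}), Finset.sum_singleton, if_neg hxc]
    · simp [betaOrb_zero, hx]
    · intro n hn
      obtain ⟨n, rfl⟩ := Nat.exists_eq_succ_of_ne_zero (by simpa using hn)
      rw [horb, if_neg hxc]

end BetaOrbit

theorem stmt_8_general (p q : ℕ) (hpq : p ≤ q) (β₁ : ℝ) (hβ₁ : 1 < β₁)
    (hroot : β₁ ^ 2 - q * β₁ - p = 0) (β₂ : ℝ) (hβ₂ : β₂ = β₁ + 1) :
    ∀ x : ℝ, 0 ≤ x → x < 1 →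
      hBeta β₁ x = hBeta β₂ x ∧
      hBeta β₁ x = 1 + (if x < β₁ - q then β₁⁻¹ else 0) := by
  intro x hx₀ hx₁
  set c := β₁ - q with hc
  have hβ₁c : β₁ * c = p := by linear_combination hroot
  have hc₀ : 0 ≤ c := nonneg_of_mul_nonneg_right (hβ₁c ▸ p.cast_nonneg) (by positivity)
  have hc₁ : c < 1 := by
    have : (p : ℝ) ≤ q := by exact_mod_cast hpq
    nlinarith
  have h₁ : hBeta β₁ x = 1 + if x < c then β₁⁻¹ else 0 := by
    have horb₁ : betaOrb β₁ 1 = c := by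
      rw [betaOrb_succ, betaOrb_zero, mul_one, Int.fract_eq_iff]
      exact ⟨hc₀, hc₁, q, by rw [hc]; push_cast; ring⟩
    have horb₂ : betaOrb β₁ 2 = 0 := by
      rw [betaOrb_succ, horb₁, hβ₁c, Int.fract_natCast]
    rw [hBeta_eq_sum_range_of_betaOrb_eq_zero horb₂ hx₀]
    simp [Finset.sum_range_succ, betaOrb_zero, horb₁, hx₁]
  have h₂ : hBeta β₂ x = 1 + if x < c then β₁⁻¹ else 0 := by
    have horb : ∀ n, betaOrb β₂ (n + 1) = c := by
      refine betaOrb_succ_eq_of_fract_mul_eq ?_ ?_ <;> rw [Int.fract_eq_iff]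
      · exact ⟨hc₀, hc₁, q + 1, by rw [hβ₂, hc]; push_cast; ring⟩
      · exact ⟨hc₀, hc₁, p, by rw [hβ₂, add_mul, hβ₁c]; push_cast; ring⟩
    rw [hBeta_of_betaOrb_succ_eq (by linarith) horb hx₁, hβ₂, add_sub_cancel_right]
  exact ⟨h₁.trans h₂.symm, h₁⟩

theorem stmt_8 (p q : ℕ) (hp : 1 ≤ p) (hpq : p ≤ q) (β₁ : ℝ) (hβ₁ : 1 < β₁)
    (hroot : β₁ ^ 2 - q * β₁ - p = 0) (β₂ : ℝ) (hβ₂ : β₂ = β₁ + 1) :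
    ∀ x : ℝ, 0 ≤ x → x < 1 →
      hBeta β₁ x = hBeta β₂ x ∧
      hBeta β₁ x = 1 + (if x < β₁ - q then β₁⁻¹ else 0) :=
  stmt_8_general p q hpq β₁ hβ₁ hroot β₂ hβ₂
end

section
/- Let β₁ > 1 be the positive root of x² - qx - p = 0 with p, q positive integers and p ≤ q, and let β₂ = β₁ + 1. Then the Rényi-Parry measures for T_{β₁} and T_{β₂} coincide: ν_{β₁} = ν_{β₂}. -/
open MeasureTheory Filter Set

theorem betaOrb_two (β : ℝ) : betaOrb β 2 = Int.fract (β * betaOrb β 1) := rfl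

theorem betaOrb_add_eq_of_fract_mul_eq {β t : ℝ} {m : ℕ} (hm : betaOrb β m = t)
    (ht : Int.fract (β * t) = t) (k : ℕ) : betaOrb β (m + k) = t := by
  induction k with
  | zero => exact hm
  | succ k ih => rw [← add_assoc, betaOrb, ih, ht]

theorem hBeta_eq_one_add_of_hasSum {β x a : ℝ} (hx : x < 1)
    (h : HasSum (fun n => if x < betaOrb β (n + 1) then (β ^ (n + 1))⁻¹ else 0) a) :
    hBeta β x = 1 + a := by
  have hshift := (hasSum_nat_add_iff (f := fun n => if x < betaOrb β n then (β ^ n)⁻¹ else 0)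
    1).mp h
  rw [hBeta, hshift.tsum_eq]
  simp [betaOrb, hx, add_comm]

theorem KBeta_eq_one_add_of_hasSum {β a : ℝ}
    (h : HasSum (fun n => betaOrb β (n + 1) / β ^ (n + 1)) a) : KBeta β = 1 + a := by
  rw [KBeta, ((hasSum_nat_add_iff (f := fun n => betaOrb β n / β ^ n) 1).mp h).tsum_eq]
  simp [betaOrb, add_comm]

theorem hasSum_div_pow_succ {β : ℝ} (hβ : 1 < β) (c : ℝ) :
    HasSum (fun n => c / β ^ (n + 1)) (c / (β - 1)) := by
  have hβ₀ : β ≠ 0 := by positivity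
  have hβ₁ : β - 1 ≠ 0 := by linarith
  have hsum : c / (β - 1) = c * β⁻¹ * (1 - β⁻¹)⁻¹ := by
    field_simp
  rw [hsum]
  refine ((hasSum_geometric_of_lt_one (by positivity) (inv_lt_one_of_one_lt₀ hβ)).mul_left
    (c * β⁻¹)).congr_fun fun n => ?_
  rw [pow_succ, inv_pow]
  field_simp

theorem hBeta_of_betaOrb_two_eq_zero {β x : ℝ} (h : betaOrb β 2 = 0) (hx₀ : 0 ≤ x)
    (hx₁ : x < 1) : hBeta β x = 1 + if x < betaOrb β 1 then β⁻¹ else 0 := by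
  refine hBeta_eq_one_add_of_hasSum hx₁ (hasSum_single 0 fun n hn => ?_) |>.trans (by simp)
  obtain ⟨k, rfl⟩ := Nat.exists_eq_add_of_le' (Nat.pos_of_ne_zero hn)
  rw [show k + 1 + 1 = 2 + k by ring, betaOrb_add_eq_of_fract_mul_eq h (by simp),
    if_neg hx₀.not_gt]

theorem KBeta_of_betaOrb_two_eq_zero {β : ℝ} (h : betaOrb β 2 = 0) :
    KBeta β = 1 + betaOrb β 1 / β := by
  refine KBeta_eq_one_add_of_hasSum (hasSum_single 0 fun n hn => ?_) |>.trans (by simp)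
  obtain ⟨k, rfl⟩ := Nat.exists_eq_add_of_le' (Nat.pos_of_ne_zero hn)
  rw [show k + 1 + 1 = 2 + k by ring, betaOrb_add_eq_of_fract_mul_eq h (by simp), zero_div]

theorem betaOrb_succ_of_betaOrb_two_eq_betaOrb_one {β : ℝ} (h : betaOrb β 2 = betaOrb β 1)
    (n : ℕ) : betaOrb β (n + 1) = betaOrb β 1 := by
  rw [add_comm]
  exact betaOrb_add_eq_of_fract_mul_eq rfl h n

theorem hBeta_of_betaOrb_two_eq_betaOrb_one {β x : ℝ} (hβ : 1 < β)
    (h : betaOrb β 2 = betaOrb β 1) (hx : x < 1) :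
    hBeta β x = 1 + if x < betaOrb β 1 then (β - 1)⁻¹ else 0 := by
  refine hBeta_eq_one_add_of_hasSum hx ?_
  simp only [betaOrb_succ_of_betaOrb_two_eq_betaOrb_one h]
  split_ifs
  · simpa [one_div] using hasSum_div_pow_succ hβ 1
  · exact hasSum_zero

theorem KBeta_of_betaOrb_two_eq_betaOrb_one {β : ℝ} (hβ : 1 < β)
    (h : betaOrb β 2 = betaOrb β 1) : KBeta β = 1 + betaOrb β 1 / (β - 1) := by
  refine KBeta_eq_one_add_of_hasSum ?_
  simpa only [betaOrb_succ_of_betaOrb_two_eq_betaOrb_one h] using hasSum_div_pow_succ hβ _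

theorem nuBeta_eq_of_eqOn {β β' : ℝ} (hh : EqOn (hBeta β) (hBeta β') (Ico 0 1))
    (hK : KBeta β = KBeta β') : nuBeta β = nuBeta β' := by
  refine withDensity_congr_ae (EqOn.aeEq_restrict (fun x hx => ?_) measurableSet_Ico)
  simp only [hh hx, hK]

theorem stmt_9_general (p q : ℕ) (hpq : p ≤ q) (β₁ : ℝ) (hβ₁ : 1 < β₁)
    (hroot : β₁ ^ 2 - q * β₁ - p = 0) (β₂ : ℝ) (hβ₂ : β₂ = β₁ + 1) :
    nuBeta β₁ = nuBeta β₂ := by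
  subst hβ₂
  set t := β₁ - q with ht
  have hprod : β₁ * t = p := by linear_combination hroot
  have hpq' : (p : ℝ) ≤ q := by exact_mod_cast hpq
  have ht₀ : 0 ≤ t := by nlinarith
  have ht₁ : t < 1 := by nlinarith
  have h₁₁ : betaOrb β₁ 1 = t := by
    rw [betaOrb_one, Int.fract_eq_iff]
    exact ⟨ht₀, ht₁, q, by rw [ht]; push_cast; ring⟩
  have h₁₂ : betaOrb β₁ 2 = 0 := by
    rw [betaOrb_two, h₁₁, hprod, Int.fract_natCast]
  have h₂₁ : betaOrb (β₁ + 1) 1 = t := by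
    rw [betaOrb_one, Int.fract_eq_iff]
    exact ⟨ht₀, ht₁, q + 1, by push_cast; rw [ht]; ring⟩
  have h₂₂ : betaOrb (β₁ + 1) 2 = betaOrb (β₁ + 1) 1 := by
    rw [betaOrb_two, h₂₁, Int.fract_eq_iff]
    exact ⟨ht₀, ht₁, p, by linear_combination hprod⟩
  have hβ₂ : 1 < β₁ + 1 := by linarith
  refine nuBeta_eq_of_eqOn (fun x hx => ?_) ?_
  · rw [hBeta_of_betaOrb_two_eq_zero h₁₂ hx.1 hx.2,
      hBeta_of_betaOrb_two_eq_betaOrb_one hβ₂ h₂₂ hx.2, h₁₁, h₂₁, add_sub_cancel_right]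
  · rw [KBeta_of_betaOrb_two_eq_zero h₁₂, KBeta_of_betaOrb_two_eq_betaOrb_one hβ₂ h₂₂,
      h₁₁, h₂₁, add_sub_cancel_right]

theorem stmt_9 (p q : ℕ) (hp : 1 ≤ p) (hpq : p ≤ q) (β₁ : ℝ) (hβ₁ : 1 < β₁)
    (hroot : β₁ ^ 2 - q * β₁ - p = 0) (β₂ : ℝ) (hβ₂ : β₂ = β₁ + 1) :
    nuBeta β₁ = nuBeta β₂ :=
  stmt_9_general p q hpq β₁ hβ₁ hroot β₂ hβ₂
end

section
/- If β₁, β₂ > 1 are non-integers with identical Rényi-Parry measures ν_{β₁} = ν_{β₂}, then the unnormalized density functions agree everywhere: h_{β₁}(x) = h_{β₂}(x) for every x ∈ [0,1), and in particular the normalization constants satisfy K_{β₁} = K_{β₂}. -/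
open MeasureTheory Filter Set

/-!
`h_β` is a sum of step functions `β^{-n} 1_{[0, T_β^n(1))}` with summable weights,
hence right-continuous, and its left limit at `1` is the weight `1` of the only point `T_β^0(1) = 1`
of the orbit that is `≥ 1`. Equal measures give `h_{β₁}/K_{β₁} = h_{β₂}/K_{β₂}` almost everywhere on
`[0,1)`, hence everywhere there by right-continuity; letting `x → 1⁻` gives `K_{β₁} = K_{β₂}`.
-/

open Topology

section WeightAbove

variable {a w : ℕ → ℝ}

/-- `hBeta β` is, by definition, `weightAbove (betaOrb β) fun n => (β ^ n)⁻¹`. -/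
noncomputable def weightAbove (a w : ℕ → ℝ) (x : ℝ) : ℝ :=
  ∑' n, if x < a n then w n else 0

lemma weightAbove_nonneg (hw₀ : ∀ n, 0 ≤ w n) (x : ℝ) : 0 ≤ weightAbove a w x :=
  tsum_nonneg fun n => ite_nonneg (hw₀ n) le_rfl

lemma summable_ite_lt (hw₀ : ∀ n, 0 ≤ w n) (hw : Summable w) (x : ℝ) :
    Summable fun n => if x < a n then w n else 0 :=
  hw.of_nonneg_of_le (fun n => ite_nonneg (hw₀ n) le_rfl)
    (fun n => by split_ifs <;> simp [hw₀ n])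

lemma antitone_weightAbove (hw₀ : ∀ n, 0 ≤ w n) (hw : Summable w) : Antitone (weightAbove a w) :=
  fun x y hxy => Summable.tsum_le_tsum
    (fun n => by
      by_cases hy : y < a n
      · simp [hy, hxy.trans_lt hy]
      · simpa [hy] using ite_nonneg (hw₀ n) le_rfl)
    (summable_ite_lt hw₀ hw y) (summable_ite_lt hw₀ hw x)

lemma tendsto_weightAbove_of_eventually_iff {l : Filter ℝ} {p : ℕ → Prop} [DecidablePred p]
    (hw₀ : ∀ n, 0 ≤ w n) (hw : Summable w) (hp : ∀ n, ∀ᶠ y in l, (y < a n ↔ p n)) :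
    Tendsto (weightAbove a w) l (𝓝 (∑' n, if p n then w n else 0)) := by
  refine tendsto_tsum_of_dominated_convergence hw (fun n => ?_)
    (Eventually.of_forall fun y n => by split_ifs <;> simp [abs_of_nonneg, hw₀ n])
  refine tendsto_const_nhds.congr' ?_
  filter_upwards [hp n] with y hy
  simp only [hy]

lemma tendsto_weightAbove_nhdsGT (hw₀ : ∀ n, 0 ≤ w n) (hw : Summable w) (x : ℝ) :
    Tendsto (weightAbove a w) (𝓝[>] x) (𝓝 (weightAbove a w x)) := by
  refine tendsto_weightAbove_of_eventually_iff hw₀ hw fun n => ?_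
  rcases lt_or_ge x (a n) with hx | hx
  · filter_upwards [Ioo_mem_nhdsGT hx] with y hy
    simp [hx, hy.2]
  · filter_upwards [self_mem_nhdsWithin] with y (hy : x < y)
    simp [hx.not_gt, (hx.trans hy.le).not_gt]

lemma tendsto_weightAbove_nhdsLT (hw₀ : ∀ n, 0 ≤ w n) (hw : Summable w) (x : ℝ) :
    Tendsto (weightAbove a w) (𝓝[<] x) (𝓝 (∑' n, if x ≤ a n then w n else 0)) := by
  refine tendsto_weightAbove_of_eventually_iff hw₀ hw fun n => ?_
  rcases le_or_gt x (a n) with hx | hx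
  · filter_upwards [self_mem_nhdsWithin] with y (hy : y < x)
    simp [hx, hy.trans_le hx]
  · filter_upwards [Ioo_mem_nhdsLT hx] with y hy
    simp [hx.not_ge, hy.1.le.not_gt]

end WeightAbove

section BetaExpansion

variable {β : ℝ}

lemma betaOrb_nonneg (n : ℕ) : 0 ≤ betaOrb β n := by
  cases n with
  | zero => simp [betaOrb]
  | succ n => exact Int.fract_nonneg _

lemma betaOrb_le_one (n : ℕ) : betaOrb β n ≤ 1 := by
  cases n with
  | zero => simp [betaOrb]
  | succ n => exact (Int.fract_lt_one _).le

lemma betaOrb_lt_one {n : ℕ} (hn : n ≠ 0) : betaOrb β n < 1 := by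
  obtain ⟨n, rfl⟩ := Nat.exists_eq_succ_of_ne_zero hn
  exact Int.fract_lt_one _

lemma summable_inv_pow (hβ : 1 < β) : Summable fun n : ℕ => (β ^ n)⁻¹ := by
  simpa only [inv_pow] using
    summable_geometric_of_lt_one (inv_nonneg.2 (zero_le_one.trans hβ.le)) (inv_lt_one_of_one_lt₀ hβ)

lemma inv_pow_nonneg (hβ : 1 < β) (n : ℕ) : 0 ≤ (β ^ n)⁻¹ :=
  inv_nonneg.2 (pow_nonneg (zero_le_one.trans hβ.le) n)

lemma hBeta_nonneg (hβ : 1 < β) (x : ℝ) : 0 ≤ hBeta β x :=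
  weightAbove_nonneg (inv_pow_nonneg hβ) x

lemma measurable_hBeta (hβ : 1 < β) : Measurable (hBeta β) :=
  (antitone_weightAbove (inv_pow_nonneg hβ) (summable_inv_pow hβ)).measurable

lemma tendsto_hBeta_nhdsGT (hβ : 1 < β) (x : ℝ) :
    Tendsto (hBeta β) (𝓝[>] x) (𝓝 (hBeta β x)) :=
  tendsto_weightAbove_nhdsGT (inv_pow_nonneg hβ) (summable_inv_pow hβ) x

lemma tendsto_hBeta_nhdsLT_one (hβ : 1 < β) : Tendsto (hBeta β) (𝓝[<] 1) (𝓝 1) := by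
  have hsum : (∑' n : ℕ, if 1 ≤ betaOrb β n then (β ^ n)⁻¹ else 0) = 1 := by
    rw [tsum_eq_single 0 fun n hn => if_neg (betaOrb_lt_one hn).not_ge]
    simp [betaOrb]
  have := tendsto_weightAbove_nhdsLT (a := betaOrb β) (inv_pow_nonneg hβ) (summable_inv_pow hβ) 1
  rwa [hsum] at this

lemma one_le_KBeta (hβ : 1 < β) : 1 ≤ KBeta β := by
  have hβ₀ : 0 < β := zero_lt_one.trans hβ
  have hterm (n : ℕ) : 0 ≤ betaOrb β n / β ^ n := div_nonneg (betaOrb_nonneg n) (by positivity)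
  have hsum : Summable fun n => betaOrb β n / β ^ n :=
    (summable_inv_pow hβ).of_nonneg_of_le hterm fun n =>
      div_le_of_le_mul₀ (by positivity) (by positivity)
        (by rw [inv_mul_cancel₀ (by positivity)]; exact betaOrb_le_one n)
  unfold KBeta
  simpa [betaOrb] using hsum.le_tsum 0 fun n _ => hterm n

end BetaExpansion

lemma frequently_nhdsGT_of_ae_restrict {P : ℝ → Prop} {s : Set ℝ} {x : ℝ} (hs : s ∈ 𝓝[>] x)
    (hP : ∀ᵐ y ∂volume.restrict s, P y) : ∃ᶠ y in 𝓝[>] x, P y := by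
  intro hnot
  obtain ⟨u, hxu, hsub⟩ := mem_nhdsGT_iff_exists_Ioo_subset.1 (inter_mem hnot hs)
  have hzero : volume ({y | ¬P y} ∩ s) = 0 :=
    le_antisymm ((Measure.le_restrict_apply _ _).trans (ae_iff.1 hP).le) zero_le
  have := measure_mono_null hsub hzero
  rw [Real.volume_Ioo, ENNReal.ofReal_eq_zero] at this
  linarith [show x < u from hxu]

lemma eq_of_ae_restrict_eq_of_tendsto_nhdsGT {f g : ℝ → ℝ} {s : Set ℝ} {x : ℝ}
    (hs : s ∈ 𝓝[>] x) (hfg : f =ᵐ[volume.restrict s] g)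
    (hf : Tendsto f (𝓝[>] x) (𝓝 (f x))) (hg : Tendsto g (𝓝[>] x) (𝓝 (g x))) : f x = g x :=
  tendsto_nhds_unique_of_frequently_eq hf hg (frequently_nhdsGT_of_ae_restrict hs hfg)

lemma density_ae_eq_of_nuBeta_eq {β₁ β₂ : ℝ} (hβ₁ : 1 < β₁) (hβ₂ : 1 < β₂)
    (hν : nuBeta β₁ = nuBeta β₂) :
    (fun x => hBeta β₁ x / KBeta β₁) =ᵐ[volume.restrict (Ico 0 1)]
      fun x => hBeta β₂ x / KBeta β₂ := by
  have hmeas (β : ℝ) (hβ : 1 < β) :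
      AEMeasurable (fun x => ENNReal.ofReal (hBeta β x / KBeta β)) (volume.restrict (Ico 0 1)) :=
    ((measurable_hBeta hβ).div_const _).ennreal_ofReal.aemeasurable
  have hnonneg (β : ℝ) (hβ : 1 < β) (x : ℝ) : 0 ≤ hBeta β x / KBeta β :=
    div_nonneg (hBeta_nonneg hβ x) (zero_le_one.trans (one_le_KBeta hβ))
  filter_upwards [(withDensity_eq_iff_of_sigmaFinite (hmeas β₁ hβ₁) (hmeas β₂ hβ₂)).1 hν]
    with x hx
  exact (ENNReal.ofReal_eq_ofReal_iff (hnonneg β₁ hβ₁ x) (hnonneg β₂ hβ₂ x)).1 hx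

theorem stmt_10_general (β₁ β₂ : ℝ) (hβ₁ : 1 < β₁) (hβ₂ : 1 < β₂)
    (hν : nuBeta β₁ = nuBeta β₂) :
    (∀ x : ℝ, 0 ≤ x → x < 1 → hBeta β₁ x = hBeta β₂ x) ∧ KBeta β₁ = KBeta β₂ := by
  have hK₁ : KBeta β₁ ≠ 0 := (zero_lt_one.trans_le (one_le_KBeta hβ₁)).ne'
  have hK₂ : KBeta β₂ ≠ 0 := (zero_lt_one.trans_le (one_le_KBeta hβ₂)).ne'
  have hdens : ∀ x ∈ Ico (0 : ℝ) 1, hBeta β₁ x / KBeta β₁ = hBeta β₂ x / KBeta β₂ :=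
    fun x hx => eq_of_ae_restrict_eq_of_tendsto_nhdsGT (Ico_mem_nhdsGT_of_mem hx)
      (density_ae_eq_of_nuBeta_eq hβ₁ hβ₂ hν)
      ((tendsto_hBeta_nhdsGT hβ₁ x).div_const _) ((tendsto_hBeta_nhdsGT hβ₂ x).div_const _)
  have hK : KBeta β₁ = KBeta β₂ := by
    have hlim₂ : Tendsto (fun x => hBeta β₁ x / KBeta β₁) (𝓝[<] 1) (𝓝 (1 / KBeta β₂)) :=
      ((tendsto_hBeta_nhdsLT_one hβ₂).div_const _).congr'
        (eventually_of_mem (Ico_mem_nhdsLT zero_lt_one) fun x hx => (hdens x hx).symm)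
    have := tendsto_nhds_unique ((tendsto_hBeta_nhdsLT_one hβ₁).div_const _) hlim₂
    rwa [one_div, one_div, inv_inj] at this
  refine ⟨fun x hx₀ hx₁ => ?_, hK⟩
  have := hdens x ⟨hx₀, hx₁⟩
  rwa [hK, div_left_inj' hK₂] at this

theorem stmt_10 (β₁ β₂ : ℝ) (hβ₁ : 1 < β₁) (hβ₂ : 1 < β₂)
    (hni₁ : ¬ ∃ k : ℤ, β₁ = k) (hni₂ : ¬ ∃ k : ℤ, β₂ = k)
    (hν : nuBeta β₁ = nuBeta β₂) :
    (∀ x : ℝ, 0 ≤ x → x < 1 → hBeta β₁ x = hBeta β₂ x) ∧ KBeta β₁ = KBeta β₂ :=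
  stmt_10_general β₁ β₂ hβ₁ hβ₂ hν
end

section
/- Let β₁ be the positive root of x² - qx - p = 0 with p, q positive integers, p ≤ q, and let β₂ = β₁ + 1. If log β₁ / log β₂ is rational, then p = q = 1, so that β₁ = (1+√5)/2 and β₂ = β₁² = (3+√5)/2. -/
open MeasureTheory Filter Set

/-!
Since `q² < q² + 4p < (q + 2)²` and `q² + 4p ≠ (q + 1)²` by parity, `β₁` is irrational, so the
map `ℤ[ω] → ℝ`, `ω ↦ β₁`, where `ω² = qω + p`, is injective. A relation `β₁ⁿ = (β₁ + 1)ᵐ` with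
`m, n` coprime therefore already holds in `ℤ[ω]`, and taking norms gives `pⁿ = (q + 1 - p)ᵐ`,
whence `p = cᵐ`. If `c ≥ 2` then `β₁ > q ≥ p ≥ 2ᵐ`, whereas
`β₁ · β₁ᵐ ≤ β₁ⁿ = (β₁ + 1)ᵐ < (2β₁)ᵐ` forces `β₁ < 2ᵐ`. So `c = 1`, i.e. `p = 1 = q + 1 - p`.
-/

theorem Nat.not_isSquare_sq_add_four_mul {p q : ℕ} (hp : 0 < p) (hpq : p ≤ q) :
    ¬ IsSquare (q ^ 2 + 4 * p) := by
  rintro ⟨k, hk⟩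
  have hqk : q < k := by nlinarith
  have hkq : k < q + 2 := by nlinarith
  obtain rfl : k = q + 1 := by omega
  have : 4 * p = 2 * q + 1 := by linarith
  omega

theorem irrational_of_sq_eq {p q : ℕ} {x : ℝ} (hx : x ^ 2 = q * x + p)
    (hD : ¬ IsSquare (q ^ 2 + 4 * p)) : Irrational x := by
  have hsqrt : √((q ^ 2 + 4 * p : ℕ) : ℝ) = |2 * x - q| := by
    rw [← Real.sqrt_sq_eq_abs]; push_cast; congr 1; linear_combination -4 * hx
  have hirr := irrational_sqrt_natCast_iff.2 hD
  rw [hsqrt] at hirr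
  rcases abs_choice (2 * x - q) with h | h <;> rw [h] at hirr
  · exact (hirr.of_sub_natCast q).of_natCast_mul 2
  · exact (hirr.of_neg.of_sub_natCast q).of_natCast_mul 2

section

open QuadraticAlgebra

theorem QuadraticAlgebra.lift_injective_of_irrational {a b : ℤ}
    (u : {u : ℝ // u * u = a • 1 + b • u}) (hu : Irrational (u : ℝ)) :
    Function.Injective (lift u) := by
  refine (injective_iff_map_eq_zero _).2 fun z hz => ?_
  simp only [lift_apply_apply, zsmul_eq_mul, mul_one] at hz
  have him : z.im = 0 := by
    by_contra h
    exact ((hu.intCast_mul h).intCast_add z.re).ne_zero hz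
  have hre : z.re = 0 := by exact_mod_cast (by simpa [him] using hz : (z.re : ℝ) = 0)
  ext <;> simp [him, hre]

theorem norm_eq_of_pow_eq_add_one_pow {a b : ℤ} {x : ℝ} (hx : x ^ 2 = b * x + a)
    (hirr : Irrational x) {m n : ℕ} (h : x ^ n = (x + 1) ^ m) :
    (-a) ^ n = (1 + b - a) ^ m := by
  let u : {u : ℝ // u * u = a • 1 + b • u} :=
    ⟨x, by simp only [zsmul_eq_mul, mul_one]; linear_combination hx⟩
  have hω : (ω : QuadraticAlgebra ℤ a b) ^ n = (ω + 1) ^ m := by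
    have hωx : lift u ω = x := by simp [u]
    apply lift_injective_of_irrational u hirr
    rw [map_pow, map_pow, map_add, map_one, hωx]
    exact h
  have hnorm := congrArg QuadraticAlgebra.norm hω
  simp only [map_pow] at hnorm
  convert hnorm using 2 <;> simp [norm_def]

end

theorem exists_coprime_pow_eq_pow_of_log_div_log_eq {x y : ℝ} (hx : 1 < x) (hy : 1 < y)
    {r : ℚ} (h : Real.log x / Real.log y = r) :
    ∃ m n : ℕ, m ≠ 0 ∧ m.Coprime n ∧ x ^ n = y ^ m := by
  have hlx := Real.log_pos hx
  have hly := Real.log_pos hy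
  have hnum : 0 < r.num := Rat.num_pos.2 (by exact_mod_cast h ▸ div_pos hlx hly)
  refine ⟨r.num.natAbs, r.den, by omega, r.reduced, ?_⟩
  have hm : ((r.num.natAbs : ℕ) : ℝ) = r.num := by simp [abs_of_pos hnum]
  apply Real.log_injOn_pos (pow_pos (by linarith : 0 < x) _) (pow_pos (by linarith : 0 < y) _)
  rw [Real.log_pow, Real.log_pow, hm]
  rw [div_eq_iff hly.ne', Rat.cast_def] at h
  field_simp at h
  linear_combination h

theorem lt_two_pow_of_pow_eq_add_one_pow {x : ℝ} (hx : 1 < x) {m n : ℕ} (hm : m ≠ 0)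
    (h : x ^ n = (x + 1) ^ m) : x < 2 ^ m := by
  have hmn : m < n :=
    (pow_lt_pow_iff_right₀ hx).1 (h ▸ pow_lt_pow_left₀ (lt_add_one x) (by positivity) hm)
  have hxm : 0 < x ^ m := by positivity
  refine lt_of_mul_lt_mul_right ?_ hxm.le
  calc x * x ^ m = x ^ (m + 1) := by ring
    _ ≤ x ^ n := pow_le_pow_right₀ hx.le hmn
    _ = (x + 1) ^ m := h
    _ < (2 * x) ^ m := pow_lt_pow_left₀ (by linarith) (by linarith) hm
    _ = 2 ^ m * x ^ m := mul_pow _ _ _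

open Real goldenRatio in
theorem eq_goldenRatio_of_sq_eq {x : ℝ} (hx : 0 < x) (h : x ^ 2 = x + 1) : x = φ := by
  have hfactor : (x - φ) * (x - ψ) = 0 := by
    linear_combination h - x * goldenRatio_add_goldenConj + goldenRatio_mul_goldenConj
  rcases mul_eq_zero.1 hfactor with h | h
  · linarith
  · linarith [goldenConj_neg]

theorem stmt_16 (p q : ℕ) (hp : 1 ≤ p) (hpq : p ≤ q) (β₁ : ℝ) (hβ₁ : 1 < β₁)
    (hroot : β₁ ^ 2 - q * β₁ - p = 0) (β₂ : ℝ) (hβ₂ : β₂ = β₁ + 1)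
    (hlog : ∃ r : ℚ, Real.log β₁ / Real.log β₂ = r) :
    p = 1 ∧ q = 1 ∧ β₁ = (1 + Real.sqrt 5) / 2 ∧ β₂ = β₁ ^ 2 ∧
      β₂ = (3 + Real.sqrt 5) / 2 := by
  subst hβ₂
  have hsq : β₁ ^ 2 = q * β₁ + p := by linear_combination hroot
  have hqβ : (q : ℝ) < β₁ := by nlinarith [(Nat.one_le_cast (α := ℝ)).2 hp]
  have hirr := irrational_of_sq_eq hsq (Nat.not_isSquare_sq_add_four_mul hp hpq)
  obtain ⟨r, hr⟩ := hlog
  obtain ⟨m, n, hm, hmn, hpow⟩ :=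
    exists_coprime_pow_eq_pow_of_log_div_log_eq hβ₁ (by linarith) hr
  have hnorm := norm_eq_of_pow_eq_add_one_pow (a := p) (b := q) (by push_cast; exact hsq) hirr hpow
  have hnat : p ^ n = (q + 1 - p) ^ m := by
    have := congrArg Int.natAbs hnorm
    rw [Int.natAbs_pow, Int.natAbs_pow] at this
    convert this using 2 <;> omega
  obtain ⟨c, hpc, hc⟩ := Nat.exists_eq_pow_of_exponent_coprime_of_pow_eq_pow hmn.symm hnat
  obtain rfl : c = 1 := by
    rcases Nat.lt_trichotomy c 1 with h | h | h
    · obtain rfl : c = 0 := by omega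
      simp [hpc, hm] at hp
    · exact h
    · have h2c : (2 : ℝ) ^ m ≤ c ^ m := by exact_mod_cast Nat.pow_le_pow_left h m
      have hcq : (c : ℝ) ^ m ≤ q := by exact_mod_cast hpc ▸ hpq
      linarith [lt_two_pow_of_pow_eq_add_one_pow hβ₁ hm hpow]
  obtain rfl : p = 1 := by simpa using hpc
  obtain rfl : q = 1 := by rw [one_pow] at hc; omega
  have hφ := eq_goldenRatio_of_sq_eq (by linarith : (0 : ℝ) < β₁) (by simpa using hsq)
  exact ⟨rfl, rfl, hφ, by simpa using hsq.symm, by rw [hφ]; ring⟩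
end

section
/- Let p, q be positive integers with minimal polynomial condition: if x² - qx - p divides x^n - (x+1)^m in ℤ[x] for some positive integers m, n, then p = 1 and q = 1. -/
open Polynomial

/-
Evaluating the divisibility at x = 0 gives -p ∣ -1, so p = 1; then evaluating at x = -1,
where (x + 1)^m vanishes, gives 1 + q - p = q ∣ (-1)^n, so q = 1.
-/

lemma Nat.eq_one_of_natCast_dvd_isUnit {k : ℕ} {u : ℤ} (hu : IsUnit u) (h : (k : ℤ) ∣ u) :
    k = 1 :=
  Nat.isUnit_iff.mp (Int.ofNat_isUnit.mp (isUnit_of_dvd_unit h hu))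

theorem stmt_17_general (p q : ℕ) (m n : ℕ) (hm : 1 ≤ m) (hn : 1 ≤ n)
    (hdvd : (X ^ 2 - C (q : ℤ) * X - C (p : ℤ)) ∣ (X ^ n - (X + 1) ^ m)) :
    p = 1 ∧ q = 1 := by
  have hp : (p : ℤ) ∣ 1 := by
    simpa [zero_pow (by omega : n ≠ 0)] using eval_dvd (x := (0 : ℤ)) hdvd
  obtain rfl : p = 1 := Nat.eq_one_of_natCast_dvd_isUnit isUnit_one hp
  have hq : (q : ℤ) ∣ (-1) ^ n := by
    simpa [zero_pow (by omega : m ≠ 0)] using eval_dvd (x := (-1 : ℤ)) hdvd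
  exact ⟨rfl, Nat.eq_one_of_natCast_dvd_isUnit (isUnit_one.neg.pow n) hq⟩

theorem stmt_17 (p q : ℕ) (hp : 1 ≤ p) (hq : 1 ≤ q) (m n : ℕ) (hm : 1 ≤ m) (hn : 1 ≤ n)
    (hdvd : (X ^ 2 - C (q : ℤ) * X - C (p : ℤ)) ∣ (X ^ n - (X + 1) ^ m)) :
    p = 1 ∧ q = 1 :=
  stmt_17_general p q m n hm hn hdvd
end
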